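/- arXiv:1802.03923 — 2 statements merged into one kernel-verified Lean document; each statement's English description precedes it below -/
import Mathlib

section
/- (KKT fixed-point characterization at the optimum) Fix γ ∈ (0,1], λ > 0, a finite index set T, and symmetric matrices H_t ∈ ℝ^{d×d} (t ∈ T). If M* is optimal for λ, i.e., M* ⪰ O and P_λ(M*) ≤ P_λ(M') for all M' ⪰ O, then λM* = [S*]_+, where S* := −Σ_{t∈T} ℓ_γ'(⟨M*, H_t⟩) H_t. -/
open scoped BigOperators
open scoped Matrix

/-- Frobenius inner product ⟨A,B⟩ = tr(Aᵀ B). -/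
noncomputable def frob {d : ℕ} (A B : Matrix (Fin d) (Fin d) ℝ) : ℝ :=
  Matrix.trace (Aᵀ * B)

/-- Frobenius norm ‖A‖_F = √⟨A,A⟩. -/
noncomputable def frobNorm {d : ℕ} (A : Matrix (Fin d) (Fin d) ℝ) : ℝ :=
  Real.sqrt (frob A A)

/-- Smoothed hinge loss ℓ_γ. -/
noncomputable def shinge (γ x : ℝ) : ℝ :=
  if 1 < x then 0 else if 1 - γ ≤ x then (1 - x) ^ 2 / (2 * γ) else 1 - x - γ / 2

/-- Derivative of the smoothed hinge loss ℓ_γ'. -/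
noncomputable def shinge' (γ x : ℝ) : ℝ :=
  if 1 < x then 0 else if 1 - γ ≤ x then -(1 - x) / γ else -1

/-- Primal objective P_λ(M) = Σ_t ℓ_γ(⟨M,H_t⟩) + (λ/2)‖M‖_F². -/
noncomputable def Pobj {d : ℕ} {ι : Type*} (γ lam : ℝ) (T : Finset ι)
    (H : ι → Matrix (Fin d) (Fin d) ℝ) (M : Matrix (Fin d) (Fin d) ℝ) : ℝ :=
  (∑ t ∈ T, shinge γ (frob M (H t))) + lam / 2 * frobNorm M ^ 2

/-- Gradient ∇P_λ(M) = Σ_t ℓ_γ'(⟨M,H_t⟩) H_t + λ M. -/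
noncomputable def gradP {d : ℕ} {ι : Type*} (γ lam : ℝ) (T : Finset ι)
    (H : ι → Matrix (Fin d) (Fin d) ℝ) (M : Matrix (Fin d) (Fin d) ℝ) :
    Matrix (Fin d) (Fin d) ℝ :=
  (∑ t ∈ T, shinge' γ (frob M (H t)) • H t) + lam • M

/-! Since ℓ_γ' is (1/γ)-Lipschitz, P_λ(M + εN) ≤ P_λ(M) + ε⟨∇P_λ(M), N⟩ + O(ε²). At a
minimiser M* over the PSD cone this forces ⟨∇P_λ(M*), N⟩ ≥ 0 for every direction N with
M* + εN ⪰ O for small ε > 0. The directions xxᵀ give ∇P_λ(M*) = λM* − S* ⪰ O, and the directions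
±M* give ⟨∇P_λ(M*), M*⟩ = 0; together with λM* ⪰ O these are the conditions characterising
λM* = [S*]_+. -/

open Matrix Finset Filter Topology Set

section
variable {d : ℕ}

lemma frob_comm (A B : Matrix (Fin d) (Fin d) ℝ) : frob A B = frob B A := by
  rw [frob, frob, ← trace_transpose, transpose_mul, transpose_transpose]

lemma frob_add_left (A B C : Matrix (Fin d) (Fin d) ℝ) :
    frob (A + B) C = frob A C + frob B C := by
  simp only [frob, transpose_add, Matrix.add_mul, trace_add]

lemma frob_smul_left (c : ℝ) (A B : Matrix (Fin d) (Fin d) ℝ) :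
    frob (c • A) B = c * frob A B := by
  simp only [frob, transpose_smul, Matrix.smul_mul, trace_smul, smul_eq_mul]

lemma frob_sum_left {ι : Type*} (T : Finset ι) (A : ι → Matrix (Fin d) (Fin d) ℝ)
    (B : Matrix (Fin d) (Fin d) ℝ) : frob (∑ t ∈ T, A t) B = ∑ t ∈ T, frob (A t) B := by
  simp only [frob, transpose_sum, Matrix.sum_mul, trace_sum]

lemma frob_neg_left (A B : Matrix (Fin d) (Fin d) ℝ) : frob (-A) B = -frob A B := by
  simp only [frob, transpose_neg, Matrix.neg_mul, trace_neg]

lemma frob_self_nonneg (A : Matrix (Fin d) (Fin d) ℝ) : 0 ≤ frob A A := by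
  simpa [frob, conjTranspose_eq_transpose_of_trivial] using
    (posSemidef_conjTranspose_mul_self A).trace_nonneg

lemma frob_vecMulVec_self (A : Matrix (Fin d) (Fin d) ℝ) (x : Fin d → ℝ) :
    frob A (vecMulVec x x) = x ⬝ᵥ (A *ᵥ x) := by
  rw [frob, mul_vecMulVec, trace_vecMulVec, mulVec_transpose, dotProduct_mulVec]

lemma frobNorm_sq (A : Matrix (Fin d) (Fin d) ℝ) : frobNorm A ^ 2 = frob A A :=
  Real.sq_sqrt (frob_self_nonneg A)

lemma frob_add_right (A B C : Matrix (Fin d) (Fin d) ℝ) :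
    frob A (B + C) = frob A B + frob A C := by
  rw [frob_comm, frob_add_left, frob_comm B, frob_comm C]

lemma frob_smul_right (c : ℝ) (A B : Matrix (Fin d) (Fin d) ℝ) :
    frob A (c • B) = c * frob A B := by
  rw [frob_comm, frob_smul_left, frob_comm B]

lemma frob_add_smul_self (A B : Matrix (Fin d) (Fin d) ℝ) (ε : ℝ) :
    frob (A + ε • B) (A + ε • B) = frob A A + 2 * ε * frob A B + ε ^ 2 * frob B B := by
  simp only [frob_add_left, frob_add_right, frob_smul_left, frob_smul_right, frob_comm B A]
  ring

end

lemma shinge_add_le {γ : ℝ} (hγ : 0 < γ) (a s : ℝ) :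
    shinge γ (a + s) ≤ shinge γ a + shinge' γ a * s + s ^ 2 / (2 * γ) := by
  rw [← sub_nonneg]
  unfold shinge shinge'
  split_ifs <;> (field_simp; nlinarith [sq_nonneg (a + s - 1 + γ)])

lemma nonneg_of_le_add_mul_add_sq_mul {f : ℝ → ℝ} {D C : ℝ}
    (hmin : ∀ ε ∈ Ioc (0 : ℝ) 1, f 0 ≤ f ε) (hle : ∀ ε, f ε ≤ f 0 + ε * D + ε ^ 2 * C) :
    0 ≤ D := by
  have hlim : Tendsto (fun ε => D + ε * C) (𝓝[>] 0) (𝓝 D) := by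
    have : Continuous (fun ε : ℝ => D + ε * C) := by fun_prop
    simpa using (this.tendsto 0).mono_left nhdsWithin_le_nhds
  refine ge_of_tendsto hlim ?_
  filter_upwards [Ioc_mem_nhdsGT one_pos] with ε hε
  have : 0 ≤ ε * (D + ε * C) := by nlinarith [hmin ε hε, hle ε]
  exact (mul_nonneg_iff_of_pos_left hε.1).1 this

section
variable {d : ℕ} {ι : Type*} {γ lam : ℝ} {T : Finset ι} {H : ι → Matrix (Fin d) (Fin d) ℝ}
  {M : Matrix (Fin d) (Fin d) ℝ}

lemma frob_gradP (N : Matrix (Fin d) (Fin d) ℝ) :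
    frob (gradP γ lam T H M) N
      = ∑ t ∈ T, shinge' γ (frob M (H t)) * frob N (H t) + lam * frob M N := by
  simp only [gradP, frob_add_left, frob_sum_left, frob_smul_left, frob_comm (H _) N]

lemma Pobj_add_smul_le (hγ : 0 < γ) (N : Matrix (Fin d) (Fin d) ℝ) (ε : ℝ) :
    Pobj γ lam T H (M + ε • N) ≤ Pobj γ lam T H M + ε * frob (gradP γ lam T H M) N
      + ε ^ 2 * ((∑ t ∈ T, frob N (H t) ^ 2) / (2 * γ) + lam / 2 * frob N N) := by
  have hloss : ∑ t ∈ T, shinge γ (frob (M + ε • N) (H t))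
      ≤ ∑ t ∈ T, (shinge γ (frob M (H t)) + shinge' γ (frob M (H t)) * (ε * frob N (H t))
          + (ε * frob N (H t)) ^ 2 / (2 * γ)) :=
    sum_le_sum fun t _ => by
      rw [frob_add_left, frob_smul_left]
      exact shinge_add_le hγ _ _
  simp only [sum_add_distrib, mul_pow, ← sum_div, ← mul_sum, mul_left_comm _ ε] at hloss
  rw [Pobj, Pobj, frobNorm_sq, frobNorm_sq, frob_add_smul_self, frob_gradP]
  linear_combination hloss

lemma frob_gradP_nonneg_of_isMinOn (hγ : 0 < γ)
    (hmin : IsMinOn (Pobj γ lam T H) {M' | M'.PosSemidef} M)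
    {N : Matrix (Fin d) (Fin d) ℝ} (hN : ∀ ε ∈ Ioc (0 : ℝ) 1, (M + ε • N).PosSemidef) :
    0 ≤ frob (gradP γ lam T H M) N :=
  nonneg_of_le_add_mul_add_sq_mul (f := fun ε => Pobj γ lam T H (M + ε • N))
    (fun ε hε => by simpa using isMinOn_iff.1 hmin _ (hN ε hε))
    (fun ε => by simpa using Pobj_add_smul_le hγ N ε)

lemma gradP_isSymm (hH : ∀ t ∈ T, (H t).IsSymm) (hM : M.IsSymm) :
    (gradP γ lam T H M).IsSymm := by
  refine IsSymm.add ?_ (hM.smul lam)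
  rw [IsSymm, transpose_sum]
  exact sum_congr rfl fun t ht => (hH t ht).smul _

lemma gradP_posSemidef_of_isMinOn (hγ : 0 < γ) (hH : ∀ t ∈ T, (H t).IsSymm)
    (hM : M.PosSemidef) (hmin : IsMinOn (Pobj γ lam T H) {M' | M'.PosSemidef} M) :
    (gradP γ lam T H M).PosSemidef := by
  refine .of_dotProduct_mulVec_nonneg
    (isHermitian_iff_isSymm.2 (gradP_isSymm hH (isHermitian_iff_isSymm.1 hM.isHermitian)))
    fun x => ?_
  rw [star_trivial, ← frob_vecMulVec_self]
  refine frob_gradP_nonneg_of_isMinOn hγ hmin fun ε hε => hM.add ?_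
  simpa using (posSemidef_vecMulVec_self_star x).smul hε.1.le

lemma frob_gradP_self_eq_zero_of_isMinOn (hγ : 0 < γ) (hM : M.PosSemidef)
    (hmin : IsMinOn (Pobj γ lam T H) {M' | M'.PosSemidef} M) :
    frob (gradP γ lam T H M) M = 0 := by
  have hup : 0 ≤ frob (gradP γ lam T H M) M :=
    frob_gradP_nonneg_of_isMinOn hγ hmin fun ε hε => by
      rw [show M + ε • M = (1 + ε) • M by module]
      exact hM.smul (by linarith [hε.1])
  have hdown : 0 ≤ frob (gradP γ lam T H M) (-M) :=
    frob_gradP_nonneg_of_isMinOn hγ hmin fun ε hε => by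
      rw [show M + ε • -M = (1 - ε) • M by module]
      exact hM.smul (by linarith [hε.2])
  rw [frob_comm, frob_neg_left, frob_comm] at hdown
  linarith
end

theorem kkt_fixed_point_general {d : ℕ} {ι : Type*} (γ lam : ℝ)
    (hγ : 0 < γ) (hlam : 0 < lam)
    (T : Finset ι) (H : ι → Matrix (Fin d) (Fin d) ℝ)
    (hH : ∀ t ∈ T, (H t).IsSymm)
    (Mstar : Matrix (Fin d) (Fin d) ℝ) (hMstar : Mstar.PosSemidef)
    (hopt : ∀ M' : Matrix (Fin d) (Fin d) ℝ, M'.PosSemidef →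
      Pobj γ lam T H Mstar ≤ Pobj γ lam T H M') :
    let S := -(∑ t ∈ T, shinge' γ (frob Mstar (H t)) • H t)
    (lam • Mstar).PosSemidef ∧ (-(S - lam • Mstar)).PosSemidef ∧
      frob (lam • Mstar) (S - lam • Mstar) = 0 := by
  intro S
  have hmin : IsMinOn (Pobj γ lam T H) {M' | M'.PosSemidef} Mstar := isMinOn_iff.2 hopt
  have hgrad : -(S - lam • Mstar) = gradP γ lam T H Mstar := by
    simp only [S, gradP]
    abel
  refine ⟨hMstar.smul hlam.le, hgrad ▸ gradP_posSemidef_of_isMinOn hγ hH hMstar hmin, ?_⟩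
  rw [← neg_neg (S - lam • Mstar), hgrad, frob_smul_left, frob_comm, frob_neg_left,
    frob_gradP_self_eq_zero_of_isMinOn hγ hMstar hmin]
  simp

/-- KKT fixed-point characterization at the optimum: λM* = [S*]_+ where
S* = −Σ_t ℓ_γ'(⟨M*,H_t⟩)H_t.  The identity λM* = [S*]_+ is expressed through
the unique characterization of the positive-part decomposition:
λM* ⪰ O, S* − λM* ⪯ O and ⟨λM*, S* − λM*⟩ = 0. -/
theorem kkt_fixed_point {d : ℕ} {ι : Type*} (γ lam : ℝ)
    (hγ : 0 < γ) (hγ1 : γ ≤ 1) (hlam : 0 < lam)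
    (T : Finset ι) (H : ι → Matrix (Fin d) (Fin d) ℝ)
    (hH : ∀ t ∈ T, (H t).IsSymm)
    (Mstar : Matrix (Fin d) (Fin d) ℝ) (hMstar : Mstar.PosSemidef)
    (hopt : ∀ M' : Matrix (Fin d) (Fin d) ℝ, M'.PosSemidef →
      Pobj γ lam T H Mstar ≤ Pobj γ lam T H M') :
    let S := -(∑ t ∈ T, shinge' γ (frob Mstar (H t)) • H t)
    (lam • Mstar).PosSemidef ∧ (-(S - lam • Mstar)).PosSemidef ∧
      frob (lam • Mstar) (S - lam • Mstar) = 0 :=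
  kkt_fixed_point_general γ lam hγ hlam T H hH Mstar hMstar hopt
end

section
/- (Projected Gradient Bound, PGB) Fix γ ∈ (0,1], λ > 0, a finite index set T, and symmetric matrices H_t ∈ ℝ^{d×d} (t ∈ T). Let M ⪰ O be any feasible solution, let M* be optimal for λ, i.e., M* ⪰ O and P_λ(M*) ≤ P_λ(M') for all M' ⪰ O, and set Q := M − (1/(2λ))∇P_λ(M). Then ‖M* − [Q]_+‖_F² ≤ ((1/(2λ))‖∇P_λ(M)‖_F)² − ‖[Q]_−‖_F². -/
open scoped BigOperators
open scoped Matrix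

/-!
`P_λ` is `λ`-strongly convex, and `∇P_λ(M)` satisfies the strong gradient inequality
`P_λ(M) + ⟨∇P_λ(M), Y - M⟩ + (λ/2)‖Y - M‖² ≤ P_λ(Y)`. A minimiser `M*` over the convex PSD cone
has quadratic growth `(λ/2)‖M - M*‖² ≤ P_λ(M) - P_λ(M*)`; together these give
`⟨∇P_λ(M), M* - M⟩ ≤ -λ‖M* - M‖²`, which implies `‖M* - Q‖ ≤ ‖∇P_λ(M)‖ / (2λ)`.
Finally `⟨M*, [Q]_-⟩ ≤ 0` and `⟨[Q]_+, [Q]_-⟩ = 0`, so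
`‖M* - [Q]_+‖² + ‖[Q]_-‖² ≤ ‖M* - Q‖²`.
-/

open Set Filter Topology
open scoped RealInnerProductSpace

theorem le_of_forall_one_sub_mul_le {a b : ℝ} (h : ∀ t ∈ Ioo (0 : ℝ) 1, (1 - t) * a ≤ b) :
    a ≤ b := by
  have hlim : Tendsto (fun t : ℝ => (1 - t) * a) (𝓝[>] 0) (𝓝 a) := by
    have : Continuous (fun t : ℝ => (1 - t) * a) := by fun_prop
    simpa using this.continuousWithinAt.tendsto (x := 0) (s := Ioi 0)
  exact le_of_tendsto hlim (eventually_of_mem (Ioo_mem_nhdsGT one_pos) h)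

theorem convexOn_univ_of_add_mul_sub_le {f f' : ℝ → ℝ}
    (h : ∀ x y, f x + f' x * (y - x) ≤ f y) : ConvexOn ℝ univ f := by
  refine ⟨convex_univ, fun x _ y _ a b ha hb hab => ?_⟩
  set z := a • x + b • y
  have hz : a * (x - z) + b * (y - z) = 0 := by
    obtain rfl : b = 1 - a := by linarith
    simp only [z, smul_eq_mul]; ring
  calc f z = a * (f z + f' z * (x - z)) + b * (f z + f' z * (y - z)) := by
        linear_combination (-f z) * hab - f' z * hz
    _ ≤ a • f x + b • f y :=
        add_le_add (mul_le_mul_of_nonneg_left (h z x) ha) (mul_le_mul_of_nonneg_left (h z y) hb)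

section StrongConvexity

variable {E : Type*} [NormedAddCommGroup E] {s t : Set E} {m : ℝ} {f : E → ℝ}

section NormedSpace

variable [NormedSpace ℝ E]

theorem StrongConvexOn.subset (hf : StrongConvexOn t m f) (hst : s ⊆ t) (hs : Convex ℝ s) :
    StrongConvexOn s m f :=
  ⟨hs, fun _ hx _ hy => hf.2 (hst hx) (hst hy)⟩

theorem StrongConvexOn.mul_sq_norm_sub_le_sub_of_isMinOn {x₀ x : E} (hf : StrongConvexOn s m f)
    (hmin : IsMinOn f s x₀) (hx₀ : x₀ ∈ s) (hx : x ∈ s) :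
    m / 2 * ‖x - x₀‖ ^ 2 ≤ f x - f x₀ := by
  refine le_of_forall_one_sub_mul_le fun t ⟨ht₀, ht₁⟩ => le_of_mul_le_mul_left ?_ ht₀
  have hconv := hf.2 hx hx₀ ht₀.le (sub_nonneg.2 ht₁.le) (add_sub_cancel t 1)
  have hle := isMinOn_iff.1 hmin _ <|
    hf.1 hx hx₀ ht₀.le (sub_nonneg.2 ht₁.le) (add_sub_cancel t 1)
  simp only [smul_eq_mul] at hconv hle
  linarith

end NormedSpace

variable [InnerProductSpace ℝ E]

theorem norm_sub_sub_smul_sq_le (hm : 0 < m) {x y g : E}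
    (h : ⟪g, y - x⟫ ≤ -m * ‖y - x‖ ^ 2) :
    ‖y - (x - (1 / (2 * m)) • g)‖ ^ 2 ≤ (1 / (2 * m) * ‖g‖) ^ 2 := by
  have hc : 0 ≤ 1 / (2 * m) := by positivity
  rw [show y - (x - (1 / (2 * m)) • g) = (y - x) + (1 / (2 * m)) • g by abel, norm_add_sq_real,
    real_inner_smul_right, norm_smul, Real.norm_of_nonneg hc, real_inner_comm]
  have : 1 / (2 * m) * ⟪g, y - x⟫ ≤ -(‖y - x‖ ^ 2 / 2) :=
    calc _ ≤ 1 / (2 * m) * (-m * ‖y - x‖ ^ 2) := mul_le_mul_of_nonneg_left h hc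
      _ = _ := by field_simp
  linarith

theorem StrongConvexOn.norm_sub_gradient_step_sq_le {x₀ x g : E} (hf : StrongConvexOn s m f)
    (hm : 0 < m) (hmin : IsMinOn f s x₀) (hx₀ : x₀ ∈ s) (hx : x ∈ s)
    (hg : f x + ⟪g, x₀ - x⟫ + m / 2 * ‖x₀ - x‖ ^ 2 ≤ f x₀) :
    ‖x₀ - (x - (1 / (2 * m)) • g)‖ ^ 2 ≤ (1 / (2 * m) * ‖g‖) ^ 2 := by
  have hgrowth := hf.mul_sq_norm_sub_le_sub_of_isMinOn hmin hx₀ hx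
  rw [norm_sub_rev] at hgrowth
  exact norm_sub_sub_smul_sq_le hm (by linarith)

theorem norm_sub_sq_add_norm_sq_le {y a b : E} (hyb : ⟪y, b⟫ ≤ 0) (hab : ⟪a, b⟫ = 0) :
    ‖y - a‖ ^ 2 + ‖b‖ ^ 2 ≤ ‖y - (a + b)‖ ^ 2 := by
  rw [← sub_sub, norm_sub_sq_real (y - a), inner_sub_left, hab]
  linarith

end StrongConvexity

section SmoothedHinge

variable {γ : ℝ}

theorem shinge_add_shinge'_mul_sub_le (hγ : 0 < γ) (x y : ℝ) :
    shinge γ x + shinge' γ x * (y - x) ≤ shinge γ y := by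
  unfold shinge shinge'
  split_ifs <;> (try field_simp) <;> nlinarith [sq_nonneg (x - y), sq_nonneg (1 - y - γ)]

theorem convexOn_shinge (hγ : 0 < γ) : ConvexOn ℝ univ (shinge γ) :=
  convexOn_univ_of_add_mul_sub_le (shinge_add_shinge'_mul_sub_le hγ)

end SmoothedHinge

-- With weight `1`, `Matrix.toMatrixInnerProductSpace` has `⟪A, B⟫ = tr (B Aᴴ) = frob A B`.
noncomputable abbrev frobeniusNormedAddCommGroup (d : ℕ) :
    NormedAddCommGroup (Matrix (Fin d) (Fin d) ℝ) :=
  Matrix.toMatrixNormedAddCommGroup 1 Matrix.PosDef.one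

attribute [local instance] frobeniusNormedAddCommGroup

noncomputable abbrev frobeniusInnerProductSpace (d : ℕ) :
    InnerProductSpace ℝ (Matrix (Fin d) (Fin d) ℝ) :=
  Matrix.toMatrixInnerProductSpace 1 Matrix.PosSemidef.one

attribute [local instance] frobeniusInnerProductSpace

section Frobenius

variable {d : ℕ}

theorem frob_eq_inner (A B : Matrix (Fin d) (Fin d) ℝ) : frob A B = ⟪A, B⟫ := by
  rw [frob, Matrix.trace_mul_comm]
  show _ = (B * 1 * Aᴴ).trace
  simp

theorem frobNorm_eq_norm (A : Matrix (Fin d) (Fin d) ℝ) : frobNorm A = ‖A‖ := by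
  rw [frobNorm, frob_eq_inner, norm_eq_sqrt_real_inner]

/-- `frob A B` is the sum of the entries of the Hadamard product `A ⊙ B`, which is positive
semidefinite by the Schur product theorem. -/
theorem frob_nonneg_of_posSemidef {A B : Matrix (Fin d) (Fin d) ℝ} (hA : A.PosSemidef)
    (hB : B.PosSemidef) : 0 ≤ frob A B := by
  have hsum : frob A B = star 1 ⬝ᵥ (A ⊙ B) *ᵥ 1 := by
    simp [frob, Matrix.trace, Matrix.mul_apply, Matrix.mulVec, dotProduct]
    exact Finset.sum_comm
  rw [hsum]
  exact (hA.hadamard hB).dotProduct_mulVec_nonneg 1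

theorem convex_posSemidef : Convex ℝ {A : Matrix (Fin d) (Fin d) ℝ | A.PosSemidef} :=
  fun _ hA _ hB _ _ ha hb _ => (hA.smul ha).add (hB.smul hb)

end Frobenius

section Objective

variable {d : ℕ} {ι : Type*} {γ lam : ℝ} {T : Finset ι}
  {H : ι → Matrix (Fin d) (Fin d) ℝ}

theorem Pobj_eq (M : Matrix (Fin d) (Fin d) ℝ) :
    Pobj γ lam T H M = ∑ t ∈ T, shinge γ ⟪M, H t⟫ + lam / 2 * ‖M‖ ^ 2 := by
  simp only [Pobj, frob_eq_inner, frobNorm_eq_norm]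

theorem strongConvexOn_Pobj (hγ : 0 < γ) : StrongConvexOn univ lam (Pobj γ lam T H) := by
  have hloss (t : ι) : ConvexOn ℝ univ fun A => shinge γ ⟪A, H t⟫ := by
    simpa [real_inner_comm, Function.comp_def] using
      (convexOn_shinge hγ).comp_linearMap (innerₛₗ ℝ (H t))
  rw [strongConvexOn_iff_convex]
  simp only [Pobj_eq, add_sub_cancel_right, ← Finset.sum_fn]
  exact Finset.sum_induction _ (ConvexOn ℝ univ) (fun _ _ => ConvexOn.add)
    (convexOn_const 0 convex_univ) fun t _ => hloss t

theorem Pobj_add_inner_gradP_le (hγ : 0 < γ) (X Y : Matrix (Fin d) (Fin d) ℝ) :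
    Pobj γ lam T H X + ⟪gradP γ lam T H X, Y - X⟫ + lam / 2 * ‖Y - X‖ ^ 2
      ≤ Pobj γ lam T H Y := by
  have hgrad : ⟪gradP γ lam T H X, Y - X⟫ =
      ∑ t ∈ T, shinge' γ ⟪X, H t⟫ * (⟪Y, H t⟫ - ⟪X, H t⟫) + lam * ⟪X, Y - X⟫ := by
    simp only [gradP, frob_eq_inner, inner_add_left, sum_inner, real_inner_smul_left]
    congr 1
    refine Finset.sum_congr rfl fun t _ => ?_
    rw [← inner_sub_left, real_inner_comm (Y - X) (H t)]
  have hnorm : ‖Y‖ ^ 2 = ‖X‖ ^ 2 + 2 * ⟪X, Y - X⟫ + ‖Y - X‖ ^ 2 := by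
    rw [← norm_add_sq_real, add_sub_cancel]
  have hloss := Finset.sum_le_sum fun t (_ : t ∈ T) =>
    shinge_add_shinge'_mul_sub_le hγ ⟪X, H t⟫ ⟪Y, H t⟫
  rw [Finset.sum_add_distrib] at hloss
  rw [Pobj_eq, Pobj_eq, hgrad, hnorm]
  linarith

end Objective

theorem projected_gradient_bound_general {d : ℕ} {ι : Type*} (γ lam : ℝ)
    (hγ : 0 < γ) (hlam : 0 < lam)
    (T : Finset ι) (H : ι → Matrix (Fin d) (Fin d) ℝ)
    (M Mstar Qplus Qminus : Matrix (Fin d) (Fin d) ℝ)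
    (hM : M.PosSemidef) (hMstar : Mstar.PosSemidef)
    (hopt : ∀ M' : Matrix (Fin d) (Fin d) ℝ, M'.PosSemidef →
      Pobj γ lam T H Mstar ≤ Pobj γ lam T H M')
    (hdecomp : M - (1 / (2 * lam)) • gradP γ lam T H M = Qplus + Qminus)
    (hminus : (-Qminus).PosSemidef)
    (horth : frob Qplus Qminus = 0) :
    frobNorm (Mstar - Qplus) ^ 2 ≤
      ((1 / (2 * lam)) * frobNorm (gradP γ lam T H M)) ^ 2 - frobNorm Qminus ^ 2 := by
  have hstep :
      ‖Mstar - (Qplus + Qminus)‖ ^ 2 ≤ (1 / (2 * lam) * ‖gradP γ lam T H M‖) ^ 2 := by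
    rw [← hdecomp]
    exact ((strongConvexOn_Pobj hγ).subset (subset_univ _) convex_posSemidef)
      |>.norm_sub_gradient_step_sq_le hlam (isMinOn_iff.2 hopt) hMstar hM
        (Pobj_add_inner_gradP_le hγ M Mstar)
  have hproj :
      ‖Mstar - Qplus‖ ^ 2 + ‖Qminus‖ ^ 2 ≤ ‖Mstar - (Qplus + Qminus)‖ ^ 2 := by
    refine norm_sub_sq_add_norm_sq_le ?_ (by rw [← frob_eq_inner, horth])
    have := frob_nonneg_of_posSemidef hMstar hminus
    rwa [frob_eq_inner, inner_neg_right, neg_nonneg] at this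
  simp only [frobNorm_eq_norm]
  linarith

/-- Projected Gradient Bound (PGB).  Here Qplus = [Q]_+ and Qminus = [Q]_− are
given through the unique orthogonal PSD/NSD decomposition of
Q = M − (1/(2λ))∇P_λ(M). -/
theorem projected_gradient_bound {d : ℕ} {ι : Type*} (γ lam : ℝ)
    (hγ : 0 < γ) (hγ1 : γ ≤ 1) (hlam : 0 < lam)
    (T : Finset ι) (H : ι → Matrix (Fin d) (Fin d) ℝ)
    (hH : ∀ t ∈ T, (H t).IsSymm)
    (M Mstar Qplus Qminus : Matrix (Fin d) (Fin d) ℝ)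
    (hM : M.PosSemidef) (hMstar : Mstar.PosSemidef)
    (hopt : ∀ M' : Matrix (Fin d) (Fin d) ℝ, M'.PosSemidef →
      Pobj γ lam T H Mstar ≤ Pobj γ lam T H M')
    (hdecomp : M - (1 / (2 * lam)) • gradP γ lam T H M = Qplus + Qminus)
    (hplus : Qplus.PosSemidef) (hminus : (-Qminus).PosSemidef)
    (horth : frob Qplus Qminus = 0) :
    frobNorm (Mstar - Qplus) ^ 2 ≤
      ((1 / (2 * lam)) * frobNorm (gradP γ lam T H M)) ^ 2 - frobNorm Qminus ^ 2 :=
  projected_gradient_bound_general γ lam hγ hlam T H M Mstar Qplus Qminus hM hMstar hopt hdecomp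
    hminus horth
end
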